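/- FQSym^(ℓ) is free as an associative algebra over the set of elements F_{σ,u} (equivalently, over the set of elements G_{σ,u}) indexed by connected colored permutations (σ,u), i.e. those with σ a connected permutation and u an arbitrary color word. In particular, the generating series of the algebraic generators is c(ℓt), where c(t) = Σ_{n≥1} c_n t^n = 1 − (Σ_{n≥0} n! t^n)^{-1} counts connected permutations. -/

import Mathlib

open scoped BigOperators
open scoped Classical

abbrev Series (α : Type) (ℓ : ℕ) : Type := List (α × Fin ℓ) → ℤ

def ncMul {α : Type} {ℓ : ℕ} (F G : Series α ℓ) : Series α ℓ :=
  fun w => ∑ k ∈ Finset.range (w.length + 1), F (w.take k) * G (w.drop k)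

def stdList {α : Type} [LinearOrder α] (v : List α) : List ℕ :=
  v.mapIdx fun i a =>
    ((List.range v.length).filter fun j =>
      v.getD j a < a ∨ (v.getD j a = a ∧ j < i)).length

def permList {n : ℕ} (σ : Equiv.Perm (Fin n)) : List ℕ :=
  (List.finRange n).map fun i => (σ i : ℕ)

def colorList {n ℓ : ℕ} (u : Fin n → Fin ℓ) : List (Fin ℓ) :=
  (List.finRange n).map u

def Gfun {α : Type} [LinearOrder α] {ℓ n : ℕ} (σ : Equiv.Perm (Fin n))
    (u : Fin n → Fin ℓ) : Series α ℓ :=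
  fun w =>
    if stdList (w.map Prod.fst) = permList σ ∧ w.map Prod.snd = colorList u
    then 1 else 0

def Ffun {α : Type} [LinearOrder α] {ℓ n : ℕ} (σ : Equiv.Perm (Fin n))
    (u : Fin n → Fin ℓ) : Series α ℓ :=
  Gfun σ.symm (fun i => u (σ.symm i))

/-- A permutation `σ ∈ S_n` is connected when no proper prefix `{σ_1,…,σ_i}` equals
`{1,…,i}` (written 0-based). -/
def Connected {n : ℕ} (σ : Equiv.Perm (Fin n)) : Prop :=
  ∀ i : ℕ, 0 < i → i < n →
    Finset.image (fun j => (σ j : ℕ))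
        (Finset.univ.filter (fun j : Fin n => (j : ℕ) < i)) ≠ Finset.range i

abbrev CPermS (ℓ : ℕ) := Σ n : ℕ, Equiv.Perm (Fin n) × (Fin n → Fin ℓ)

/-- Connected colored permutations of positive size. -/
abbrev ConnCP (ℓ : ℕ) := {a : CPermS ℓ // 0 < a.1 ∧ Connected a.2.1}

/-- The unit series (the empty word). -/
noncomputable def oneSer {α : Type} (ℓ : ℕ) : Series α ℓ := fun w => if w = [] then 1 else 0

/-- Product of the `G`'s along a list of colored permutations. -/
noncomputable def prodG {ℓ : ℕ} (l : List (CPermS ℓ)) : Series ℕ ℓ :=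
  l.foldr (fun a acc => ncMul (Gfun a.2.1 a.2.2) acc) (oneSer ℓ)

/-- Product of the `F`'s along a list of colored permutations. -/
noncomputable def prodF {ℓ : ℕ} (l : List (CPermS ℓ)) : Series ℕ ℓ :=
  l.foldr (fun a acc => ncMul (Ffun a.2.1 a.2.2) acc) (oneSer ℓ)

/-!
Cutting a colored permutation at its splitting points writes it uniquely as a shifted
concatenation `a₁ ⊕ ⋯ ⊕ aₖ` of connected colored permutations. The product `G_{a₁} ⋯ G_{aₖ}`
is the sum of the `G_p` over the colored permutations `p` whose blocks at the cuts of
`a₁ ⊕ ⋯ ⊕ aₖ` standardize to `a₁, …, aₖ`. Since each `aᵢ` is connected, such a `p` splits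
only at these cuts, and `p = a₁ ⊕ ⋯ ⊕ aₖ` is the only one splitting at all of them. So the
products are unitriangular over the `G_p` with respect to inclusion of splitting sets, which
gives linear independence and spanning. Since `F_{σ,u} = G_{σ⁻¹, u ∘ σ⁻¹}` and inversion
preserves connectedness, the same holds for the `F`.
-/

open Finset Equiv

section Standardization

/-- The letters of `v` tagged with their positions: `stdList v` lists the ranks of the tagged
letters in the lexicographic order. -/
def key (v : List ℕ) (i : ℕ) : ℕ ×ₗ ℕ := toLex (v.getD i 0, i)

noncomputable def rank (v : List ℕ) (i : ℕ) : ℕ :=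
  #{j ∈ range v.length | key v j < key v i}

variable {v v' : List ℕ} {i j k s : ℕ}

theorem key_lt_key_iff :
    key v j < key v i ↔ v.getD j 0 < v.getD i 0 ∨ v.getD j 0 = v.getD i 0 ∧ j < i :=
  Prod.Lex.toLex_lt_toLex

theorem key_lt_key_iff_of_lt (hij : i < j) : key v i < key v j ↔ v.getD i 0 ≤ v.getD j 0 := by
  rw [key_lt_key_iff]; omega

theorem key_injective (v : List ℕ) : Function.Injective (key v) :=
  fun _ _ h => congrArg (fun x => (ofLex x).2) h

theorem length_stdList (v : List ℕ) : (stdList v).length = v.length := by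
  simp [stdList]

theorem getElem_stdList (h : i < (stdList v).length) : (stdList v)[i] = rank v i := by
  have hi : i < v.length := by rwa [length_stdList] at h
  simp only [stdList, List.getElem_mapIdx, rank, card_def, filter_val, range_val,
    Multiset.range, Multiset.filter_coe, Multiset.coe_card]
  congr 1
  refine List.filter_congr fun j hj => ?_
  rw [List.mem_range] at hj
  simp [key, Prod.Lex.toLex_lt_toLex, List.getElem?_eq_getElem hj, List.getElem?_eq_getElem hi]

theorem getD_stdList (hi : i < v.length) : (stdList v).getD i 0 = rank v i := by
  rw [List.getD_eq_getElem _ _ (by rwa [length_stdList]), getElem_stdList]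

theorem rank_lt_rank (hi : i < v.length) (h : key v i < key v j) : rank v i < rank v j := by
  refine card_lt_card ⟨fun x hx => ?_, fun hsub => ?_⟩
  · simp only [mem_filter] at hx ⊢
    exact ⟨hx.1, hx.2.trans h⟩
  · simpa using (mem_filter.mp (hsub (mem_filter.mpr ⟨mem_range.mpr hi, h⟩))).2

theorem rank_lt_rank_iff (hi : i < v.length) (hj : j < v.length) :
    rank v i < rank v j ↔ key v i < key v j := by
  refine ⟨fun h => ?_, rank_lt_rank hi⟩
  by_contra hle
  rcases (not_lt.mp hle).lt_or_eq with h' | h'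
  · exact (rank_lt_rank hj h').asymm h
  · exact h.ne (congrArg _ (key_injective v h'.symm))

theorem rank_injOn (v : List ℕ) : Set.InjOn (rank v) {i | i < v.length} := by
  intro i hi j hj hij
  by_contra hne
  rcases (key_injective v).ne hne |>.lt_or_gt with h | h
  · exact (rank_lt_rank hi h).ne hij
  · exact (rank_lt_rank hj h).ne' hij

theorem rank_lt_length (hi : i < v.length) : rank v i < v.length := by
  simpa [rank] using card_lt_card (filter_ssubset.mpr ⟨i, mem_range.mpr hi, lt_irrefl (key v i)⟩)

/-- Equivalently, `stdList v = stdList v'`. -/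
def SameOrder (v v' : List ℕ) : Prop :=
  v.length = v'.length ∧
    ∀ i j, i < v.length → j < v.length → (key v i < key v j ↔ key v' i < key v' j)

theorem SameOrder.rank_eq (h : SameOrder v v') (hi : i < v.length) : rank v i = rank v' i := by
  rw [rank, rank, ← h.1]
  exact congrArg card (filter_congr fun j hj => h.2 j i (mem_range.mp hj) hi)

theorem SameOrder.stdList_eq (h : SameOrder v v') : stdList v = stdList v' := by
  refine List.ext_getElem (by simp [length_stdList, h.1]) fun i h₁ h₂ => ?_
  rw [getElem_stdList, getElem_stdList]
  exact h.rank_eq (by rwa [length_stdList] at h₁)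

theorem sameOrder_stdList (v : List ℕ) : SameOrder v (stdList v) := by
  refine ⟨(length_stdList v).symm, fun i j hi hj => ?_⟩
  rw [← rank_lt_rank_iff hi hj, key_lt_key_iff (v := stdList v), getD_stdList hi,
    getD_stdList hj]
  constructor
  · exact Or.inl
  · rintro (h | ⟨h, hij⟩)
    · exact h
    · exact absurd (rank_injOn v hi hj h) hij.ne

theorem SameOrder.take (h : SameOrder v v') (k : ℕ) : SameOrder (v.take k) (v'.take k) := by
  refine ⟨by simp [h.1], fun i j hi hj => ?_⟩
  simp only [List.length_take, lt_min_iff] at hi hj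
  simpa [key, List.getD_eq_getElem?_getD, List.getElem?_take, hi.1, hj.1] using
    h.2 i j hi.2 hj.2

theorem SameOrder.drop (h : SameOrder v v') (k : ℕ) : SameOrder (v.drop k) (v'.drop k) := by
  refine ⟨by simp [h.1], fun i j hi hj => ?_⟩
  simp only [List.length_drop] at hi hj
  have := h.2 (k + i) (k + j) (by omega) (by omega)
  simp only [key, Prod.Lex.toLex_lt_toLex, List.getD_eq_getElem?_getD, List.getElem?_drop]
    at this ⊢
  omega

theorem sameOrder_map_add (v : List ℕ) (m : ℕ) : SameOrder (v.map (m + ·)) v := by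
  refine ⟨by simp, fun i j hi hj => ?_⟩
  simp only [List.length_map] at hi hj
  simp only [key, Prod.Lex.toLex_lt_toLex, List.getD_eq_getElem?_getD, List.getElem?_map,
    List.getElem?_eq_getElem hi, List.getElem?_eq_getElem hj, Option.map_some,
    Option.getD_some]
  omega

end Standardization

section Splitting

/-- The inequality is weak so that splitting is invariant under standardization. -/
def SplitsAt (v : List ℕ) (s : ℕ) : Prop :=
  ∀ i j, i < s → s ≤ j → j < v.length → v.getD i 0 ≤ v.getD j 0

variable {v v' : List ℕ} {i j k s : ℕ}

theorem splitsAt_iff_key :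
    SplitsAt v s ↔ ∀ i j, i < s → s ≤ j → j < v.length → key v i < key v j :=
  forall₅_congr fun _ _ hi hj _ => (key_lt_key_iff_of_lt (by omega)).symm

theorem SameOrder.splitsAt_iff (h : SameOrder v v') : SplitsAt v s ↔ SplitsAt v' s := by
  simp only [splitsAt_iff_key, ← h.1]
  exact forall₅_congr fun i j hi hj hjv => h.2 i j (by omega) hjv

theorem splitsAt_of_length_le (h : v.length ≤ s) : SplitsAt v s :=
  fun _ _ _ hj hjv => absurd (hj.trans_lt hjv) (by omega)

theorem SplitsAt.take (h : SplitsAt v s) (k : ℕ) : SplitsAt (v.take k) s := by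
  intro i j hi hj hjv
  simp only [List.length_take, lt_min_iff] at hjv
  simpa [List.getD_eq_getElem?_getD, List.getElem?_take, hjv.1, show i < k by omega] using
    h i j hi hj hjv.2

theorem SplitsAt.drop (h : SplitsAt v (k + s)) : SplitsAt (v.drop k) s := by
  intro i j hi hj hjv
  simp only [List.length_drop] at hjv
  simpa [List.getD_eq_getElem?_getD, List.getElem?_drop] using
    h (k + i) (k + j) (by omega) (by omega) (by omega)

theorem SplitsAt.of_drop (hk : SplitsAt v k) (h : SplitsAt (v.drop k) s) :
    SplitsAt v (k + s) := by
  intro i j hi hj hjv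
  rcases lt_or_ge i k with hik | hik
  · exact hk i j hik (by omega) hjv
  · simpa [List.getD_eq_getElem?_getD, List.getElem?_drop, Nat.add_sub_cancel' hik,
      show k + (j - k) = j by omega] using
      h (i - k) (j - k) (by omega) (by omega) (by simp only [List.length_drop]; omega)

theorem SplitsAt.of_take (hk : SplitsAt v k) (hs : s ≤ k) (h : SplitsAt (v.take k) s) :
    SplitsAt v s := by
  intro i j hi hj hjv
  rcases lt_or_ge j k with hjk | hjk
  · simpa [List.getD_eq_getElem?_getD, List.getElem?_take, hjk, show i < k by omega] using
      h i j hi hj (by simp only [List.length_take]; omega)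
  · exact hk i j (by omega) hjk hjv

theorem rank_eq_rank_take (h : SplitsAt v k) (hk : k ≤ v.length) (hi : i < k) :
    rank v i = rank (v.take k) i := by
  have hkey : ∀ j < k, key (v.take k) j = key v j := fun j hj => by
    simp [key, List.getD_eq_getElem?_getD, hj]
  rw [rank, rank, List.length_take, min_eq_left hk]
  congr 1
  ext j
  simp only [mem_filter, mem_range]
  constructor
  · rintro ⟨hj, hji⟩
    have hjk : j < k := by
      by_contra! hjk
      exact (splitsAt_iff_key.mp h i j hi hjk hj).asymm hji
    exact ⟨hjk, by rwa [hkey j hjk, hkey i hi]⟩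
  · rintro ⟨hj, hji⟩
    exact ⟨by omega, by rwa [hkey j hj, hkey i hi] at hji⟩

theorem rank_eq_add_rank_drop (h : SplitsAt v k) (hki : k ≤ i) (hi : i < v.length) :
    rank v i = k + rank (v.drop k) (i - k) := by
  have hkey : ∀ j, key v (k + j) < key v i ↔ key (v.drop k) j < key (v.drop k) (i - k) :=
    fun j => by
      simp only [key, Prod.Lex.toLex_lt_toLex, List.getD_eq_getElem?_getD, List.getElem?_drop,
        Nat.add_sub_cancel' hki]
      omega
  rw [rank, ← Nat.add_sub_cancel' (hki.trans hi.le), range_add, filter_union,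
    card_union_of_disjoint (disjoint_filter_filter (disjoint_range_addLeftEmbedding _ _)),
    filter_true_of_mem fun j hj =>
      splitsAt_iff_key.mp h j i (mem_range.mp hj) hki (by omega),
    card_range, filter_map, card_map, rank, List.length_drop]
  congr 2
  exact filter_congr fun j _ => hkey j

theorem stdList_eq_append (h : SplitsAt v k) (hk : k ≤ v.length) :
    stdList v = stdList (v.take k) ++ (stdList (v.drop k)).map (k + ·) := by
  refine List.ext_getElem (by simp [length_stdList]; omega) fun i h₁ h₂ => ?_
  rw [length_stdList] at h₁
  rw [getElem_stdList, List.getElem_append]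
  split_ifs with hik
  · rw [getElem_stdList, rank_eq_rank_take h hk (by simpa [length_stdList, hk] using hik)]
  · simp only [length_stdList, List.length_take, min_eq_left hk, List.getElem_map,
      getElem_stdList] at hik ⊢
    exact rank_eq_add_rank_drop h (by omega) h₁

end Splitting

section Permutations

variable {n ℓ : ℕ} {i s : ℕ}

theorem length_permList (σ : Perm (Fin n)) : (permList σ).length = n := by
  simp [permList]

theorem getD_permList (σ : Perm (Fin n)) (hi : i < n) : (permList σ).getD i 0 = σ ⟨i, hi⟩ := by
  simp [permList, List.getD_eq_getElem?_getD, hi]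

theorem permList_injective : Function.Injective (permList (n := n)) := fun σ τ h =>
  Equiv.ext fun i => Fin.ext <| by
    rw [← getD_permList σ i.isLt, ← getD_permList τ i.isLt, h]

theorem colorList_injective : Function.Injective (colorList (n := n) (ℓ := ℓ)) :=
  fun _ _ h => funext fun i => List.map_inj_left.mp h i (List.mem_finRange i)

theorem card_filter_apply_lt (σ : Perm (Fin n)) (i : Fin n) : #{j | σ j < σ i} = σ i := by
  calc #{j | σ j < σ i} = #((Iio (σ i)).map σ.symm.toEmbedding) := by
        congr 1
        ext j
        simp [mem_map_equiv]
    _ = σ i := by rw [card_map, Fin.card_Iio]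

theorem rank_permList (σ : Perm (Fin n)) (hi : i < n) : rank (permList σ) i = σ ⟨i, hi⟩ := by
  rw [← card_filter_apply_lt, ← card_map Fin.valEmbedding, rank, length_permList]
  congr 1
  ext j
  simp only [mem_filter, Finset.mem_range, mem_map, Finset.mem_univ, true_and,
    Fin.valEmbedding_apply, key_lt_key_iff]
  constructor
  · rintro ⟨hj, hji⟩
    refine ⟨⟨j, hj⟩, ?_, rfl⟩
    rw [getD_permList σ hj, getD_permList σ hi] at hji
    rcases hji with h | ⟨h, hji⟩
    · exact h
    · exact absurd (σ.injective (Fin.ext h)) (by simp [Fin.ext_iff]; omega)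
  · rintro ⟨j, hji, rfl⟩
    rw [getD_permList σ j.isLt, getD_permList σ hi]
    exact ⟨j.isLt, Or.inl hji⟩

theorem stdList_permList (σ : Perm (Fin n)) : stdList (permList σ) = permList σ := by
  refine List.ext_getElem (by simp [length_stdList]) fun i h₁ h₂ => ?_
  rw [length_permList] at h₂
  rw [getElem_stdList, rank_permList σ h₂, ← getD_permList σ h₂, List.getD_eq_getElem]

theorem exists_permList_eq_stdList (v : List ℕ) (hn : v.length = n) :
    ∃ σ : Perm (Fin n), permList σ = stdList v := by
  subst hn
  have hinj : Function.Injective fun i : Fin v.length => (⟨rank v i, rank_lt_length i.isLt⟩ :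
      Fin v.length) := fun i j h => Fin.ext (rank_injOn v i.isLt j.isLt (Fin.mk.inj h))
  refine ⟨Equiv.ofBijective _ (Finite.injective_iff_bijective.mp hinj),
    List.ext_getElem (by simp [length_permList, length_stdList]) fun i h₁ h₂ => ?_⟩
  rw [getElem_stdList]
  simp [permList]

theorem exists_colorList_eq (c : List (Fin ℓ)) (hn : c.length = n) :
    ∃ u : Fin n → Fin ℓ, colorList u = c := by
  subst hn
  exact ⟨c.get, List.map_get_finRange c⟩

theorem mapsTo_symm_of_mapsTo {α : Type*} (σ : Perm α) {t : Set α} (ht : t.Finite)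
    (h : Set.MapsTo σ t t) : Set.MapsTo σ.symm t t := fun x hx => by
  obtain ⟨y, hy, rfl⟩ := ((ht.injOn_iff_bijOn_of_mapsTo h).mp σ.injective.injOn).surjOn hx
  simpa using hy

theorem splitsAt_permList_iff (σ : Perm (Fin n)) :
    SplitsAt (permList σ) s ↔ Set.MapsTo σ {j | (j : ℕ) < s} {j | (j : ℕ) < s} := by
  have hfin : ∀ t : Set (Fin n), t.Finite := fun t => t.toFinite
  constructor
  · intro h j (hj : (j : ℕ) < s)
    by_contra hσj
    have hup : Set.MapsTo σ {k | s ≤ (k : ℕ)} {k | s ≤ (k : ℕ)} := fun k (hk : s ≤ (k : ℕ)) => by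
      have := h j k hj hk (by simp [length_permList])
      rw [getD_permList σ j.isLt, getD_permList σ k.isLt] at this
      exact (not_lt.mp hσj).trans this
    have : s ≤ ((σ.symm (σ j) : Fin n) : ℕ) :=
      mapsTo_symm_of_mapsTo σ (hfin _) hup (show s ≤ ((σ j : Fin n) : ℕ) from not_lt.mp hσj)
    rw [Equiv.symm_apply_apply] at this
    omega
  · intro h i j hi hj hjn
    rw [length_permList] at hjn
    rw [getD_permList σ (by omega), getD_permList σ hjn]
    have hσi : ((σ ⟨i, by omega⟩ : Fin n) : ℕ) < s := h (show i < s from hi)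
    by_contra! hσj
    have : ((σ.symm (σ ⟨j, hjn⟩) : Fin n) : ℕ) < s :=
      mapsTo_symm_of_mapsTo σ (hfin _) h (show ((σ ⟨j, hjn⟩ : Fin n) : ℕ) < s by omega)
    rw [Equiv.symm_apply_apply] at this
    simp only at this
    omega

theorem connected_iff_not_mapsTo (σ : Perm (Fin n)) :
    Connected σ ↔ ∀ s, 0 < s → s < n → ¬ Set.MapsTo σ {j | (j : ℕ) < s} {j | (j : ℕ) < s} := by
  refine forall₃_congr fun s _ hs => not_congr ⟨fun h j hj => ?_, fun h => ?_⟩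
  · have : ((σ j : Fin n) : ℕ) ∈ range s := h ▸ mem_image_of_mem _ (by simpa using hj)
    simpa using this
  · refine eq_of_subset_of_card_le (fun x hx => ?_) ?_
    · obtain ⟨j, hj, rfl⟩ := mem_image.mp hx
      simpa using h (by simpa using hj)
    · rw [card_range, card_image_of_injective _ (fun a b hab => σ.injective (Fin.ext hab)),
        Fin.card_filter_val_lt, min_eq_right hs.le]

theorem connected_iff_not_splitsAt (σ : Perm (Fin n)) :
    Connected σ ↔ ∀ s, 0 < s → s < n → ¬ SplitsAt (permList σ) s := by
  simp only [connected_iff_not_mapsTo, splitsAt_permList_iff]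

theorem Connected.symm {σ : Perm (Fin n)} (h : Connected σ) : Connected σ.symm := by
  rw [connected_iff_not_mapsTo] at h ⊢
  exact fun s hs hsn hmaps => h s hs hsn <| by
    simpa using mapsTo_symm_of_mapsTo σ.symm (Set.toFinite _) hmaps

end Permutations

section Products

variable {ℓ n : ℕ}

theorem ncMul_apply_of_length_eq {α : Type} {F H : Series α ℓ}
    (hF : ∀ w, F w ≠ 0 → w.length = n) (w : List (α × Fin ℓ)) :
    ncMul F H w = F (w.take n) * H (w.drop n) := by
  have hF0 : ∀ k, k ≠ n → k ≤ w.length → F (w.take k) = 0 := fun k hk hkw => by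
    by_contra h
    exact hk (by simpa [hkw] using hF _ h)
  rw [ncMul]
  rcases le_or_gt n w.length with hn | hn
  · refine sum_eq_single_of_mem n (mem_range.mpr (by omega)) fun k hk hkn => ?_
    rw [hF0 k hkn (by simpa [Nat.lt_succ_iff] using hk), zero_mul]
  · have hk : ∀ k ∈ range (w.length + 1), F (w.take k) * H (w.drop k) = 0 := fun k hk => by
      rw [hF0 k (by simp at hk; omega) (by simpa [Nat.lt_succ_iff] using hk), zero_mul]
    rw [sum_eq_zero hk, List.take_of_length_le hn.le, ← w.take_length,
      hF0 w.length hn.ne le_rfl, zero_mul]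

theorem Gfun_ne_zero_iff {σ : Perm (Fin n)} {u : Fin n → Fin ℓ} {w : List (ℕ × Fin ℓ)} :
    Gfun σ u w ≠ 0 ↔ stdList (w.map Prod.fst) = permList σ ∧ w.map Prod.snd = colorList u := by
  rw [Gfun]
  split_ifs with h <;> simp [h]

theorem length_eq_of_Gfun_ne_zero {σ : Perm (Fin n)} {u : Fin n → Fin ℓ}
    {w : List (ℕ × Fin ℓ)} (h : Gfun σ u w ≠ 0) : w.length = n := by
  simpa [length_stdList, length_permList] using congrArg List.length (Gfun_ne_zero_iff.mp h).1

theorem Gfun_congr (σ : Perm (Fin n)) (u : Fin n → Fin ℓ) {w w' : List (ℕ × Fin ℓ)}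
    (h₁ : SameOrder (w.map Prod.fst) (w'.map Prod.fst)) (h₂ : w.map Prod.snd = w'.map Prod.snd) :
    Gfun σ u w = Gfun σ u w' := by
  rw [Gfun, Gfun, h₁.stdList_eq, h₂]

def size (l : List (CPermS ℓ)) : ℕ := (l.map (·.1)).sum

theorem prodG_nil_apply (w : List (ℕ × Fin ℓ)) : prodG [] w = if w = [] then 1 else 0 := rfl

theorem prodG_cons_apply (a : CPermS ℓ) (l : List (CPermS ℓ)) (w : List (ℕ × Fin ℓ)) :
    prodG (a :: l) w = Gfun a.2.1 a.2.2 (w.take a.1) * prodG l (w.drop a.1) :=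
  ncMul_apply_of_length_eq (fun _ => length_eq_of_Gfun_ne_zero) w

theorem prodG_cons_ne_zero_iff {a : CPermS ℓ} {l : List (CPermS ℓ)} {w : List (ℕ × Fin ℓ)} :
    prodG (a :: l) w ≠ 0 ↔ Gfun a.2.1 a.2.2 (w.take a.1) ≠ 0 ∧ prodG l (w.drop a.1) ≠ 0 := by
  rw [prodG_cons_apply, mul_ne_zero_iff]

theorem length_eq_of_prodG_ne_zero {l : List (CPermS ℓ)} {w : List (ℕ × Fin ℓ)}
    (h : prodG l w ≠ 0) : w.length = size l := by
  induction l generalizing w with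
  | nil =>
    rw [prodG_nil_apply] at h
    split_ifs at h with hw
    · simp [hw, size]
    · exact absurd rfl h
  | cons a l ih =>
    obtain ⟨ha, hl⟩ := prodG_cons_ne_zero_iff.mp h
    have h₁ := length_eq_of_Gfun_ne_zero ha
    have h₂ := ih hl
    simp only [List.length_take, List.length_drop] at h₁ h₂
    simp only [size, List.map_cons, List.sum_cons] at h₂ ⊢
    omega

theorem prodG_congr (l : List (CPermS ℓ)) {w w' : List (ℕ × Fin ℓ)}
    (h₁ : SameOrder (w.map Prod.fst) (w'.map Prod.fst)) (h₂ : w.map Prod.snd = w'.map Prod.snd) :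
    prodG l w = prodG l w' := by
  induction l generalizing w w' with
  | nil =>
    have : w.length = w'.length := by simpa using h₁.1
    simp only [prodG_nil_apply, ← List.length_eq_zero_iff, this]
  | cons a l ih =>
    rw [prodG_cons_apply, prodG_cons_apply, Gfun_congr _ _ (w' := w'.take a.1),
      ih (w' := w'.drop a.1)]
    · simpa only [List.map_drop] using h₁.drop a.1
    · simp only [List.map_drop, h₂]
    · simpa only [List.map_take] using h₁.take a.1
    · simp only [List.map_take, h₂]

def toWord (σ : Perm (Fin n)) (u : Fin n → Fin ℓ) : List (ℕ × Fin ℓ) :=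
  (permList σ).zip (colorList u)

theorem map_fst_toWord (σ : Perm (Fin n)) (u : Fin n → Fin ℓ) :
    (toWord σ u).map Prod.fst = permList σ :=
  List.map_fst_zip (by simp [length_permList, colorList])

theorem map_snd_toWord (σ : Perm (Fin n)) (u : Fin n → Fin ℓ) :
    (toWord σ u).map Prod.snd = colorList u :=
  List.map_snd_zip (by simp [length_permList, colorList])

theorem length_toWord (σ : Perm (Fin n)) (u : Fin n → Fin ℓ) : (toWord σ u).length = n := by
  simpa [length_permList] using congrArg List.length (map_fst_toWord σ u)

theorem toWord_inj {σ τ : Perm (Fin n)} {u v : Fin n → Fin ℓ} :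
    toWord σ u = toWord τ v ↔ σ = τ ∧ u = v := by
  refine ⟨fun h => ⟨permList_injective ?_, colorList_injective ?_⟩, fun h => by rw [h.1, h.2]⟩
  · rw [← map_fst_toWord σ u, h, map_fst_toWord]
  · rw [← map_snd_toWord σ u, h, map_snd_toWord]

theorem Gfun_toWord (σ : Perm (Fin n)) (u : Fin n → Fin ℓ) : Gfun σ u (toWord σ u) = 1 := by
  rw [Gfun, if_pos ⟨by rw [map_fst_toWord, stdList_permList], map_snd_toWord σ u⟩]

def stdWord (w : List (ℕ × Fin ℓ)) : List (ℕ × Fin ℓ) :=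
  (stdList (w.map Prod.fst)).zip (w.map Prod.snd)

theorem stdWord_toWord (σ : Perm (Fin n)) (u : Fin n → Fin ℓ) :
    stdWord (toWord σ u) = toWord σ u := by
  rw [stdWord, map_fst_toWord, map_snd_toWord, stdList_permList, toWord]

theorem prodG_eq_sum {l : List (CPermS ℓ)} (hn : size l = n) :
    prodG l = ∑ p : Perm (Fin n) × (Fin n → Fin ℓ), prodG l (toWord p.1 p.2) • Gfun p.1 p.2 := by
  funext w
  rw [Finset.sum_apply]
  by_cases hw : w.length = n
  · obtain ⟨σ, hσ⟩ := exists_permList_eq_stdList (w.map Prod.fst) (by simpa using hw)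
    obtain ⟨u, hu⟩ := exists_colorList_eq (w.map Prod.snd) (by simpa using hw)
    rw [sum_eq_single_of_mem (σ, u) (mem_univ _) fun p _ hp => ?_]
    · rw [Pi.smul_apply, Gfun, if_pos ⟨hσ.symm, hu.symm⟩, smul_eq_mul, mul_one]
      refine prodG_congr l ?_ (by rw [map_snd_toWord, hu])
      rw [map_fst_toWord, hσ]
      exact sameOrder_stdList _
    · rw [Pi.smul_apply, smul_eq_zero]
      refine Or.inr (not_not.mp fun h => hp ?_)
      obtain ⟨h₁, h₂⟩ := Gfun_ne_zero_iff.mp h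
      exact Prod.ext (permList_injective (h₁.symm.trans hσ.symm))
        (colorList_injective (h₂.symm.trans hu.symm))
  · have hl : prodG l w = 0 := not_not.mp fun h => hw (hn ▸ length_eq_of_prodG_ne_zero h)
    rw [hl, eq_comm]
    refine sum_eq_zero fun p _ => ?_
    rw [Pi.smul_apply, smul_eq_zero]
    exact Or.inr (not_not.mp fun h => hw (length_eq_of_Gfun_ne_zero h))

end Products

section BlockWords

variable {ℓ : ℕ}

def shiftWord (m : ℕ) (w : List (ℕ × Fin ℓ)) : List (ℕ × Fin ℓ) :=
  w.map fun x => (m + x.1, x.2)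

theorem prodG_shiftWord (l : List (CPermS ℓ)) (m : ℕ) (w : List (ℕ × Fin ℓ)) :
    prodG l (shiftWord m w) = prodG l w :=
  prodG_congr l (by simpa [shiftWord, Function.comp_def] using
    sameOrder_map_add (w.map Prod.fst) m) (by simp [shiftWord, Function.comp_def])

/-- The word of the shifted concatenation `σ₁ ⊕ σ₂ ⊕ ⋯` of the colored permutations of `l`. -/
def blockWord : List (CPermS ℓ) → List (ℕ × Fin ℓ)
  | [] => []
  | a :: l => toWord a.2.1 a.2.2 ++ shiftWord a.1 (blockWord l)

def cuts : List (CPermS ℓ) → Finset ℕ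
  | [] => ∅
  | a :: l => insert a.1 ((cuts l).image (a.1 + ·))

noncomputable def splitSet (v : List ℕ) : Finset ℕ :=
  {s ∈ range (v.length + 1) | 0 < s ∧ SplitsAt v s}

theorem mem_splitSet {v : List ℕ} {s : ℕ} :
    s ∈ splitSet v ↔ 0 < s ∧ s ≤ v.length ∧ SplitsAt v s := by
  simp [splitSet]
  tauto

theorem take_blockWord_cons (a : CPermS ℓ) (l : List (CPermS ℓ)) :
    (blockWord (a :: l)).take a.1 = toWord a.2.1 a.2.2 :=
  List.take_left' (length_toWord _ _)

theorem drop_blockWord_cons (a : CPermS ℓ) (l : List (CPermS ℓ)) :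
    (blockWord (a :: l)).drop a.1 = shiftWord a.1 (blockWord l) :=
  List.drop_left' (length_toWord _ _)

theorem prodG_blockWord (l : List (CPermS ℓ)) : prodG l (blockWord l) = 1 := by
  induction l with
  | nil => rfl
  | cons a l ih =>
    rw [prodG_cons_apply, take_blockWord_cons, drop_blockWord_cons, Gfun_toWord,
      prodG_shiftWord, ih, one_mul]

theorem splitsAt_append {A B : List ℕ} (h : ∀ x ∈ A, ∀ y ∈ B, x ≤ y) :
    SplitsAt (A ++ B) A.length := by
  intro i j hi hj hjl
  rw [List.length_append] at hjl
  rw [List.getD_eq_getElem _ _ (by simp; omega), List.getD_eq_getElem _ _ (by simp; omega),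
    List.getElem_append_left hi, List.getElem_append_right hj]
  exact h _ (List.getElem_mem _) _ (List.getElem_mem _)

theorem splitsAt_blockWord_cons (a : CPermS ℓ) (l : List (CPermS ℓ)) :
    SplitsAt ((blockWord (a :: l)).map Prod.fst) a.1 := by
  have hfst : (blockWord (a :: l)).map Prod.fst
      = permList a.2.1 ++ ((blockWord l).map Prod.fst).map (a.1 + ·) := by
    simp [blockWord, shiftWord, map_fst_toWord, Function.comp_def]
  have := splitsAt_append (A := permList a.2.1) (B := ((blockWord l).map Prod.fst).map (a.1 + ·))
    fun x hx y hy => by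
      obtain ⟨i, -, rfl⟩ := List.mem_map.mp hx
      obtain ⟨z, -, rfl⟩ := List.mem_map.mp hy
      omega
  rw [hfst]
  rwa [length_permList] at this

end BlockWords

section Triangularity

variable {ℓ : ℕ}

theorem length_blockWord (l : List (CPermS ℓ)) : (blockWord l).length = size l := by
  induction l with
  | nil => rfl
  | cons a l ih => simp [blockWord, shiftWord, length_toWord, ih, size]

theorem le_of_mem_cuts_cons {a : CPermS ℓ} {l : List (CPermS ℓ)} {s : ℕ}
    (hs : s ∈ cuts (a :: l)) : a.1 ≤ s := by
  simp only [cuts, mem_insert, mem_image] at hs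
  omega

theorem stdWord_eq_toWord_of_Gfun_ne_zero {n : ℕ} {σ : Perm (Fin n)} {u : Fin n → Fin ℓ}
    {w : List (ℕ × Fin ℓ)} (h : Gfun σ u w ≠ 0) : stdWord w = toWord σ u := by
  obtain ⟨h₁, h₂⟩ := Gfun_ne_zero_iff.mp h
  rw [stdWord, h₁, h₂, toWord]

theorem stdWord_eq_append {w : List (ℕ × Fin ℓ)} {k : ℕ} (h : SplitsAt (w.map Prod.fst) k)
    (hk : k ≤ w.length) :
    stdWord w = stdWord (w.take k) ++ shiftWord k (stdWord (w.drop k)) := by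
  rw [stdWord, stdList_eq_append h (by simpa using hk), ← List.take_append_drop k (w.map Prod.snd),
    List.zip_append (by simp [length_stdList]), List.zip_map_left]
  simp [stdWord, shiftWord, List.map_take, List.map_drop]

theorem cuts_subset_splitSet {l : List (CPermS ℓ)} (hl : ∀ a ∈ l, 0 < a.1) :
    cuts l ⊆ splitSet ((blockWord l).map Prod.fst) := by
  induction l with
  | nil => exact empty_subset _
  | cons a l ih =>
    have hsplit := splitsAt_blockWord_cons a l
    have hlen : ((blockWord (a :: l)).map Prod.fst).length = a.1 + size l := by
      simp [length_blockWord, size]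
    intro s hs
    simp only [cuts, mem_insert, mem_image] at hs
    rcases hs with rfl | ⟨t, ht, rfl⟩
    · exact mem_splitSet.mpr ⟨hl a List.mem_cons_self, by omega, hsplit⟩
    · obtain ⟨ht₀, htl, hts⟩ :=
        mem_splitSet.mp (ih (fun b hb => hl b (List.mem_cons_of_mem a hb)) ht)
      have hdrop : SameOrder (((blockWord (a :: l)).map Prod.fst).drop a.1)
          ((blockWord l).map Prod.fst) := by
        rw [← List.map_drop, drop_blockWord_cons]
        simpa [shiftWord, Function.comp_def] using
          sameOrder_map_add ((blockWord l).map Prod.fst) a.1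
      rw [List.length_map, length_blockWord] at htl
      exact mem_splitSet.mpr ⟨by omega, by omega, hsplit.of_drop (hdrop.splitsAt_iff.mpr hts)⟩

theorem splitSet_subset_cuts {l : List (CPermS ℓ)} (hl : ∀ a ∈ l, Connected a.2.1)
    {w : List (ℕ × Fin ℓ)} (h : prodG l w ≠ 0) : splitSet (w.map Prod.fst) ⊆ cuts l := by
  induction l generalizing w with
  | nil =>
    rw [prodG_nil_apply, ne_eq, ite_eq_right_iff, Classical.not_imp] at h
    intro s hs
    simp [h.1, mem_splitSet] at hs
    omega
  | cons a l ih =>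
    obtain ⟨ha, hrest⟩ := prodG_cons_ne_zero_iff.mp h
    have hlen := length_eq_of_Gfun_ne_zero ha
    rw [List.length_take] at hlen
    intro s hs
    obtain ⟨hs₀, hsw, hsplit⟩ := mem_splitSet.mp hs
    rcases lt_trichotomy s a.1 with hlt | rfl | hgt
    · have : SplitsAt (permList a.2.1) s := by
        rw [← (Gfun_ne_zero_iff.mp ha).1, List.map_take]
        exact (sameOrder_stdList _).splitsAt_iff.mp (hsplit.take a.1)
      exact absurd this ((connected_iff_not_splitsAt _).mp (hl a List.mem_cons_self) s hs₀ hlt)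
    · exact mem_insert_self _ _
    · have hmem : s - a.1 ∈ splitSet ((w.drop a.1).map Prod.fst) := by
        simp only [List.length_map] at hsw
        refine mem_splitSet.mpr ⟨by omega, by simp; omega, ?_⟩
        rw [List.map_drop]
        exact SplitsAt.drop (by rwa [Nat.add_sub_cancel' hgt.le])
      have := ih (fun b hb => hl b (List.mem_cons_of_mem a hb)) hrest hmem
      exact mem_insert_of_mem (mem_image.mpr ⟨s - a.1, this, by omega⟩)

theorem stdWord_eq_blockWord {l : List (CPermS ℓ)} {w : List (ℕ × Fin ℓ)} (h : prodG l w ≠ 0)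
    (hcuts : ∀ s ∈ cuts l, SplitsAt (w.map Prod.fst) s) : stdWord w = blockWord l := by
  induction l generalizing w with
  | nil =>
    rw [prodG_nil_apply, ne_eq, ite_eq_right_iff, Classical.not_imp] at h
    simp [h.1, stdWord, stdList, blockWord]
  | cons a l ih =>
    obtain ⟨ha, hrest⟩ := prodG_cons_ne_zero_iff.mp h
    have hlen := length_eq_of_Gfun_ne_zero ha
    rw [List.length_take] at hlen
    have hrest_cuts : ∀ t ∈ cuts l, SplitsAt ((w.drop a.1).map Prod.fst) t := fun t ht => by
      rw [List.map_drop]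
      exact (hcuts (a.1 + t) (mem_insert_of_mem (mem_image_of_mem _ ht))).drop
    rw [stdWord_eq_append (hcuts a.1 (mem_insert_self _ _)) (by omega),
      stdWord_eq_toWord_of_Gfun_ne_zero ha, ih hrest hrest_cuts, blockWord]

theorem splitSet_blockWord {l : List (CPermS ℓ)} (hl : ∀ a ∈ l, 0 < a.1 ∧ Connected a.2.1) :
    splitSet ((blockWord l).map Prod.fst) = cuts l :=
  Subset.antisymm (splitSet_subset_cuts (fun a ha => (hl a ha).2) (by simp [prodG_blockWord]))
    (cuts_subset_splitSet fun a ha => (hl a ha).1)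

end Triangularity

section Freeness

variable {ℓ : ℕ}

theorem shiftWord_injective (m : ℕ) : Function.Injective (shiftWord (ℓ := ℓ) m) :=
  List.map_injective_iff.mpr fun x y hxy => by
    simp only [Prod.mk.injEq, Nat.add_left_cancel_iff] at hxy
    exact Prod.ext hxy.1 hxy.2

theorem blockWord_eq_nil_iff {l : List (CPermS ℓ)} (hl : ∀ a ∈ l, 0 < a.1) :
    blockWord l = [] ↔ l = [] := by
  cases l with
  | nil => simp [blockWord]
  | cons a l =>
    have := hl a List.mem_cons_self
    simp only [← List.length_eq_zero_iff, length_blockWord, size, List.map_cons, List.sum_cons,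
      List.length_cons]
    omega

theorem blockWord_injective {l l' : List (CPermS ℓ)} (hl : ∀ a ∈ l, 0 < a.1 ∧ Connected a.2.1)
    (hl' : ∀ a ∈ l', 0 < a.1 ∧ Connected a.2.1) (h : blockWord l = blockWord l') : l = l' := by
  induction l generalizing l' with
  | nil => exact ((blockWord_eq_nil_iff fun a ha => (hl' a ha).1).mp h.symm).symm
  | cons a l ih =>
    cases l' with
    | nil => exact (blockWord_eq_nil_iff fun a ha => (hl a ha).1).mp h
    | cons b l' =>
      have hcuts : cuts (a :: l) = cuts (b :: l') := by
        rw [← splitSet_blockWord hl, ← splitSet_blockWord hl', h]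
      have hab : a.1 = b.1 := le_antisymm
        (le_of_mem_cuts_cons (hcuts ▸ mem_insert_self b.1 _ : b.1 ∈ cuts (a :: l)))
        (le_of_mem_cuts_cons (hcuts ▸ mem_insert_self a.1 _ : a.1 ∈ cuts (b :: l')))
      obtain ⟨h₁, h₂⟩ := List.append_inj h (by rw [length_toWord, length_toWord, hab])
      obtain ⟨m, σ, u⟩ := a
      obtain ⟨m', τ, v⟩ := b
      obtain rfl : m = m' := hab
      obtain ⟨rfl, rfl⟩ := toWord_inj.mp h₁
      rw [ih (fun c hc => hl c (List.mem_cons_of_mem _ hc))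
        (fun c hc => hl' c (List.mem_cons_of_mem _ hc)) (shiftWord_injective m h₂)]

theorem exists_prodG_ne_zero (w : List (ℕ × Fin ℓ)) :
    ∃ l : List (ConnCP ℓ), prodG (l.map Subtype.val) w ≠ 0 ∧
      cuts (l.map Subtype.val) ⊆ splitSet (w.map Prod.fst) := by
  induction hw : w.length using Nat.strong_induction_on generalizing w with
  | _ n ih =>
  obtain rfl | hne := eq_or_ne w []
  · exact ⟨[], by simp [prodG_nil_apply], empty_subset _⟩
  have hP : ∃ s, 0 < s ∧ SplitsAt (w.map Prod.fst) s :=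
    ⟨w.length, List.length_pos_iff.mpr hne, splitsAt_of_length_le (by simp)⟩
  obtain ⟨hs₀, hsplit⟩ := Nat.find_spec hP
  set s₀ := Nat.find hP
  have hs₀w : s₀ ≤ w.length := Nat.find_min' hP
    ⟨List.length_pos_iff.mpr hne, splitsAt_of_length_le (by simp)⟩
  -- Cut off the first block at the least positive split; minimality makes it connected.
  obtain ⟨σ, hσ⟩ := exists_permList_eq_stdList (n := s₀) ((w.map Prod.fst).take s₀) (by simp [hs₀w])
  obtain ⟨u, hu⟩ := exists_colorList_eq (n := s₀) ((w.map Prod.snd).take s₀) (by simp [hs₀w])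
  have hconn : Connected σ := by
    refine (connected_iff_not_splitsAt σ).mpr fun t ht₀ hts htsplit => Nat.find_min hP hts ⟨ht₀, ?_⟩
    rw [hσ, ← (sameOrder_stdList _).splitsAt_iff] at htsplit
    exact hsplit.of_take hts.le htsplit
  obtain ⟨l, hl, hlcuts⟩ := ih _ (by simp; omega) (w.drop s₀) rfl
  refine ⟨⟨⟨s₀, σ, u⟩, hs₀, hconn⟩ :: l, prodG_cons_ne_zero_iff.mpr ⟨?_, hl⟩, ?_⟩
  · rw [Gfun_ne_zero_iff, List.map_take, List.map_take, hσ, hu]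
    exact ⟨rfl, rfl⟩
  · intro s hs
    simp only [List.map_cons, cuts, mem_insert, mem_image] at hs
    rcases hs with rfl | ⟨t, ht, rfl⟩
    · exact mem_splitSet.mpr ⟨hs₀, by simpa using hs₀w, hsplit⟩
    · obtain ⟨ht₀, htw, htsplit⟩ := mem_splitSet.mp (hlcuts ht)
      simp only [List.length_map, List.length_drop] at htw
      rw [List.map_drop] at htsplit
      exact mem_splitSet.mpr ⟨by omega, by simp; omega, hsplit.of_drop htsplit⟩

theorem stdWord_blockWord {l : List (CPermS ℓ)} (hl : ∀ a ∈ l, 0 < a.1) :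
    stdWord (blockWord l) = blockWord l :=
  stdWord_eq_blockWord (by simp [prodG_blockWord]) fun _ hs =>
    (mem_splitSet.mp (cuts_subset_splitSet hl hs)).2.2

theorem eq_of_prodG_blockWord_ne_zero {l l₀ : List (CPermS ℓ)}
    (hl : ∀ a ∈ l, 0 < a.1 ∧ Connected a.2.1) (hl₀ : ∀ a ∈ l₀, 0 < a.1 ∧ Connected a.2.1)
    (h : prodG l (blockWord l₀) ≠ 0) (hcard : #(cuts l) ≤ #(cuts l₀)) : l = l₀ := by
  have hsub : cuts l₀ ⊆ cuts l :=
    splitSet_blockWord hl₀ ▸ splitSet_subset_cuts (fun a ha => (hl a ha).2) h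
  have hcuts : ∀ s ∈ cuts l, SplitsAt ((blockWord l₀).map Prod.fst) s := fun s hs =>
    (mem_splitSet.mp ((splitSet_blockWord hl₀).symm ▸ eq_of_subset_of_card_le hsub hcard ▸ hs)).2.2
  refine blockWord_injective hl hl₀ ?_
  rw [← stdWord_eq_blockWord h hcuts, stdWord_blockWord fun a ha => (hl₀ a ha).1]

theorem connCP_map_val (l : List (ConnCP ℓ)) : ∀ a ∈ l.map Subtype.val, 0 < a.1 ∧ Connected a.2.1 :=
  fun a ha => by
    obtain ⟨b, -, rfl⟩ := List.mem_map.mp ha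
    exact b.2

theorem linearIndependent_prodG (ℓ : ℕ) :
    LinearIndependent ℤ (fun l : List (ConnCP ℓ) => prodG (l.map Subtype.val)) := by
  rw [linearIndependent_iff]
  intro c hc
  by_contra hne
  -- Evaluate at the block word of a support element with the most cuts: by triangularity, only
  -- its own term survives.
  obtain ⟨l₀, hl₀, hmax⟩ := c.support.exists_max_image (fun l => #(cuts (l.map Subtype.val)))
    (Finsupp.support_nonempty_iff.mpr hne)
  have hval := congrFun hc (blockWord (l₀.map Subtype.val))
  rw [Finsupp.linearCombination_apply, Finsupp.sum, Finset.sum_apply,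
    sum_eq_single_of_mem l₀ hl₀ fun l hl hne => ?_] at hval
  · simp only [Pi.smul_apply, prodG_blockWord, smul_eq_mul, mul_one, Pi.zero_apply] at hval
    exact Finsupp.mem_support_iff.mp hl₀ hval
  · rw [Pi.smul_apply, smul_eq_zero]
    refine Or.inr (not_not.mp fun h => hne ?_)
    exact List.map_injective_iff.mpr Subtype.val_injective
      (eq_of_prodG_blockWord_ne_zero (connCP_map_val l) (connCP_map_val l₀) h (hmax l hl))

theorem toWord_eq_blockWord {n : ℕ} {σ : Perm (Fin n)} {u : Fin n → Fin ℓ}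
    {l : List (CPermS ℓ)} (h : prodG l (toWord σ u) ≠ 0) (hcuts : cuts l ⊆ splitSet (permList σ)) :
    toWord σ u = blockWord l := by
  rw [← stdWord_toWord σ u]
  refine stdWord_eq_blockWord h fun s hs => ?_
  rw [map_fst_toWord]
  exact (mem_splitSet.mp (hcuts hs)).2.2

theorem Gfun_mem_span_prodG {n : ℕ} (σ : Perm (Fin n)) (u : Fin n → Fin ℓ) :
    Gfun σ u ∈ Submodule.span ℤ
      (Set.range fun l : List (ConnCP ℓ) => prodG (l.map Subtype.val)) := by
  -- In the expansion of the product of the connected components of `σ`, every `G_p` other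
  -- than `G_{σ,u}` has fewer splits.
  induction hk : #(splitSet (permList σ)) using Nat.strong_induction_on generalizing n with
  | _ k ih =>
  obtain ⟨l, hl, hcuts⟩ := exists_prodG_ne_zero (toWord σ u)
  rw [map_fst_toWord] at hcuts
  set L := l.map Subtype.val
  have hw := toWord_eq_blockWord hl hcuts
  have hsize : size L = n := by rw [← length_eq_of_prodG_ne_zero hl, length_toWord]
  have hexp := prodG_eq_sum hsize
  rw [← add_sum_erase _ _ (mem_univ (σ, u)), hw, prodG_blockWord, one_smul] at hexp
  rw [eq_sub_of_add_eq hexp.symm]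
  refine Submodule.sub_mem _ (Submodule.subset_span ⟨l, rfl⟩) (Submodule.sum_mem _ fun p hp => ?_)
  by_cases hz : prodG L (toWord p.1 p.2) = 0
  · rw [hz, zero_smul]
    exact Submodule.zero_mem _
  refine Submodule.smul_mem _ _ (ih _ ?_ p.1 p.2 rfl)
  have hsub : splitSet (permList p.1) ⊆ splitSet (permList σ) :=
    (map_fst_toWord p.1 p.2 ▸ splitSet_subset_cuts (fun a ha => (connCP_map_val l a ha).2) hz).trans
      hcuts
  refine hk ▸ card_lt_card (ssubset_of_subset_of_ne hsub fun heq => ?_)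
  have := toWord_eq_blockWord hz (heq ▸ hcuts)
  exact ne_of_mem_erase hp (Prod.ext_iff.mpr (toWord_inj.mp (this.trans hw.symm)))

theorem span_prodG (ℓ : ℕ) :
    Submodule.span ℤ (Set.range fun l : List (ConnCP ℓ) => prodG (l.map Subtype.val)) =
      Submodule.span ℤ {f : Series ℕ ℓ |
        ∃ (n : ℕ) (σ : Perm (Fin n)) (u : Fin n → Fin ℓ), f = Gfun σ u} := by
  refine le_antisymm (Submodule.span_le.mpr ?_) (Submodule.span_le.mpr ?_)
  · rintro _ ⟨l, rfl⟩
    change prodG (l.map Subtype.val) ∈ _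
    rw [prodG_eq_sum rfl]
    exact Submodule.sum_mem _ fun p _ =>
      Submodule.smul_mem _ _ (Submodule.subset_span ⟨_, p.1, p.2, rfl⟩)
  · rintro _ ⟨n, σ, u, rfl⟩
    exact Gfun_mem_span_prodG σ u

/-- Chosen so that `Ffun` of `a` is `Gfun` of `connInv a`. -/
def connInv (a : ConnCP ℓ) : ConnCP ℓ :=
  ⟨⟨a.1.1, a.1.2.1.symm, fun i => a.1.2.2 (a.1.2.1.symm i)⟩, a.2.1, a.2.2.symm⟩

theorem connInv_involutive : Function.Involutive (connInv (ℓ := ℓ)) := by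
  rintro ⟨⟨n, σ, u⟩, h⟩
  simp only [connInv, Equiv.symm_symm]
  congr
  funext i
  exact congrArg u (σ.symm_apply_apply i)

theorem prodF_map_val (l : List (ConnCP ℓ)) :
    prodF (l.map Subtype.val) = prodG ((l.map connInv).map Subtype.val) := by
  induction l with
  | nil => rfl
  | cons a l ih =>
    simp only [List.map_cons, prodF, prodG, List.foldr_cons] at ih ⊢
    rw [ih]
    rfl

end Freeness

/-- `FQSym^(ℓ)` is free as an associative algebra over the family of the
`G_{σ,u}` (equivalently of the `F_{σ,u}`) indexed by connected colored permutations: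
the products of `G`'s (resp. of `F`'s) along words of connected colored permutations
are linearly independent and span `FQSym^(ℓ)` (the span of all `G_{σ,u}`). -/
theorem stmt_4 (ℓ : ℕ) :
    LinearIndependent ℤ (fun l : List (ConnCP ℓ) => prodG (l.map Subtype.val))
    ∧ Submodule.span ℤ (Set.range (fun l : List (ConnCP ℓ) => prodG (l.map Subtype.val)))
      = Submodule.span ℤ {f : Series ℕ ℓ |
          ∃ (n : ℕ) (σ : Equiv.Perm (Fin n)) (u : Fin n → Fin ℓ), f = Gfun σ u}
    ∧ LinearIndependent ℤ (fun l : List (ConnCP ℓ) => prodF (l.map Subtype.val))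
    ∧ Submodule.span ℤ (Set.range (fun l : List (ConnCP ℓ) => prodF (l.map Subtype.val)))
      = Submodule.span ℤ {f : Series ℕ ℓ |
          ∃ (n : ℕ) (σ : Equiv.Perm (Fin n)) (u : Fin n → Fin ℓ), f = Gfun σ u} := by
  have hF : (fun l : List (ConnCP ℓ) => prodF (l.map Subtype.val)) =
      (fun l : List (ConnCP ℓ) => prodG (l.map Subtype.val)) ∘ List.map connInv :=
    funext prodF_map_val
  have hinv := connInv_involutive (ℓ := ℓ)
  refine ⟨linearIndependent_prodG ℓ, span_prodG ℓ, ?_, ?_⟩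
  · rw [hF]
    exact (linearIndependent_prodG ℓ).comp _ (List.map_injective_iff.mpr hinv.injective)
  · rw [hF, (List.map_surjective_iff.mpr hinv.surjective).range_comp]
    exact span_prodG ℓ
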